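/- Let U ⊆ ℝⁿ be open and let A, B be smooth fields of symmetric n×n matrices on U such that the quadratic functions F_A(x,p) := pᵀ A(x) p and F_B(x,p) := pᵀ B(x) p Poisson-commute on U × ℝⁿ, i.e., Σ_i (∂F_A/∂p_i · ∂F_B/∂x^i − ∂F_A/∂x^i · ∂F_B/∂p_i) = 0 identically. Define the operators Â f := Σ_{i,j} ∂_i(A^{ij} ∂_j f) and B̂ f := Σ_{i,j} ∂_i(B^{ij} ∂_j f) on smooth functions f : U → ℝ. Then the commutator Â B̂ − B̂ Â is a differential operator of order at most 2 without zero-order term: there exist a smooth field Q of symmetric n×n matrices and a smooth vector field V on U such that Â(B̂ f) − B̂(Â f) = Σ_{i,j} ∂_i(Q^{ij} ∂_j f) + Σ_ℓ V^ℓ ∂_ℓ f for every smooth f. -/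

import Mathlib

open Matrix

noncomputable section

/-- Partial derivative in the `i`-th coordinate direction of a real-valued function on `ℝⁿ`. -/
def pd {n : ℕ} (i : Fin n) (f : (Fin n → ℝ) → ℝ) : (Fin n → ℝ) → ℝ :=
  fun x => fderiv ℝ f x (Pi.single i 1)

/-- Iterated partial derivatives along a list of coordinate directions. -/
def iterPD {n : ℕ} : List (Fin n) → ((Fin n → ℝ) → ℝ) → ((Fin n → ℝ) → ℝ)
  | [], f => f
  | i :: l, f => pd i (iterPD l f)

/-- `g` is a (pseudo-Riemannian) metric on `U`: a smooth field of invertible symmetric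
real `n×n` matrices. -/
structure IsMetricOn {n : ℕ} (U : Set (Fin n → ℝ))
    (g : (Fin n → ℝ) → Matrix (Fin n) (Fin n) ℝ) : Prop where
  smooth : ∀ i j : Fin n, ContDiffOn ℝ (⊤ : ℕ∞) (fun x => g x i j) U
  symm : ∀ x ∈ U, (g x).IsSymm
  nondeg : ∀ x ∈ U, IsUnit (g x).det

/-- The Christoffel symbols `Γ^k_{ij}` of the metric `g`. -/
def Gamma {n : ℕ} (g : (Fin n → ℝ) → Matrix (Fin n) (Fin n) ℝ)
    (k i j : Fin n) (x : Fin n → ℝ) : ℝ :=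
  (1/2) * ∑ ℓ, (g x)⁻¹ k ℓ *
    (pd i (fun y => g y ℓ j) x + pd j (fun y => g y ℓ i) x - pd ℓ (fun y => g y i j) x)

/-- An open interval of `ℝ` (possibly empty or unbounded): an open order-connected set. -/
def IsOpenInterval (I : Set ℝ) : Prop := IsOpen I ∧ I.OrdConnected

/-- `γ` is a `g`-geodesic defined on the open interval `I`, with values in `U`. -/
structure IsGeodesicOn {n : ℕ} (U : Set (Fin n → ℝ))
    (g : (Fin n → ℝ) → Matrix (Fin n) (Fin n) ℝ)
    (γ : ℝ → (Fin n → ℝ)) (I : Set ℝ) : Prop where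
  interval : IsOpenInterval I
  smooth : ∀ k : Fin n, ContDiffOn ℝ (⊤ : ℕ∞) (fun s => γ s k) I
  mem : ∀ t ∈ I, γ t ∈ U
  eqn : ∀ t ∈ I, ∀ k : Fin n,
    deriv (deriv fun s => γ s k) t
      + ∑ i, ∑ j, Gamma g k i j (γ t) * deriv (fun s => γ s i) t * deriv (fun s => γ s j) t = 0

/-- `g` and `gbar` are projectively equivalent on `U`: every `g`-geodesic with nowhere
vanishing velocity becomes, after a smooth reparameterization (a diffeomorphism of open
intervals), a `gbar`-geodesic. -/
def ProjEquiv {n : ℕ} (U : Set (Fin n → ℝ))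
    (g gbar : (Fin n → ℝ) → Matrix (Fin n) (Fin n) ℝ) : Prop :=
  ∀ (γ : ℝ → (Fin n → ℝ)) (I : Set ℝ), IsGeodesicOn U g γ I →
    (∀ t ∈ I, ∃ k, deriv (fun s => γ s k) t ≠ 0) →
    ∃ (φ : ℝ → ℝ) (J : Set ℝ), IsOpenInterval J ∧ ContDiffOn ℝ (⊤ : ℕ∞) φ J ∧
      Set.InjOn φ J ∧ φ '' J = I ∧ (∀ t ∈ J, deriv φ t ≠ 0) ∧
      IsGeodesicOn U gbar (γ ∘ φ) J

/-- The (1,1)-tensor `L = |det gbar / det g|^{1/(n+1)} gbar⁻¹ g` built from `g` and `gbar`. -/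
def Lfield {n : ℕ} (g gbar : (Fin n → ℝ) → Matrix (Fin n) (Fin n) ℝ)
    (x : Fin n → ℝ) : Matrix (Fin n) (Fin n) ℝ :=
  |(gbar x).det / (g x).det| ^ ((1 : ℝ)/((n : ℝ)+1)) • ((gbar x)⁻¹ * g x)

/-- The family `S(t) = adjugate (t·Id − L)`. -/
def Sfield {n : ℕ} (g gbar : (Fin n → ℝ) → Matrix (Fin n) (Fin n) ℝ) (t : ℝ)
    (x : Fin n → ℝ) : Matrix (Fin n) (Fin n) ℝ :=
  (t • (1 : Matrix (Fin n) (Fin n) ℝ) - Lfield g gbar x).adjugate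

/-- The second order operator associated (via Carter's quantization) to a field `A` of
symmetric matrices: `Â f = |det g|^{-1/2} ∑ᵢⱼ ∂ᵢ(|det g|^{1/2} Aⁱʲ ∂ⱼ f)`. -/
def assocOp {n : ℕ} (g A : (Fin n → ℝ) → Matrix (Fin n) (Fin n) ℝ)
    (f : (Fin n → ℝ) → ℝ) (x : Fin n → ℝ) : ℝ :=
  |(g x).det| ^ (-(1 : ℝ)/2) * ∑ i, ∑ j,
    pd i (fun y => |(g y).det| ^ ((1 : ℝ)/2) * A y i j * pd j f y) x

/-- The operator `K̂^{(t)}`, associated to `A = S(t)·g⁻¹`. -/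
def Khat {n : ℕ} (g gbar : (Fin n → ℝ) → Matrix (Fin n) (Fin n) ℝ) (t : ℝ)
    (f : (Fin n → ℝ) → ℝ) (x : Fin n → ℝ) : ℝ :=
  assocOp g (fun y => Sfield g gbar t y * (g y)⁻¹) f x

/-- The Beltrami-Laplace operator of `g`, associated to `A = g⁻¹`. -/
def LaplaceOp {n : ℕ} (g : (Fin n → ℝ) → Matrix (Fin n) (Fin n) ℝ)
    (f : (Fin n → ℝ) → ℝ) (x : Fin n → ℝ) : ℝ :=
  assocOp g (fun y => (g y)⁻¹) f x

/-- `K` is a Killing tensor for `g` on `U`: the associated quadratic function is constant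
along every `g`-geodesic. -/
def IsKillingTensorOn {n : ℕ} (U : Set (Fin n → ℝ))
    (g K : (Fin n → ℝ) → Matrix (Fin n) (Fin n) ℝ) : Prop :=
  ∀ (γ : ℝ → (Fin n → ℝ)) (I : Set ℝ), IsGeodesicOn U g γ I →
    ∀ τ₁ ∈ I, ∀ τ₂ ∈ I,
      (∑ i, ∑ j, deriv (fun s => γ s i) τ₁ * K (γ τ₁) i j * deriv (fun s => γ s j) τ₁) =
      (∑ i, ∑ j, deriv (fun s => γ s i) τ₂ * K (γ τ₂) i j * deriv (fun s => γ s j) τ₂)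

/-- The covariant derivative `∇_k T_{ij}` of a (0,2)-tensor field `T`. -/
def covDeriv2 {n : ℕ} (g T : (Fin n → ℝ) → Matrix (Fin n) (Fin n) ℝ)
    (k i j : Fin n) (x : Fin n → ℝ) : ℝ :=
  pd k (fun y => T y i j) x - (∑ s, Gamma g s k i x * T x s j)
    - ∑ s, Gamma g s k j x * T x i s

/-- The Ricci curvature tensor `R_{ij}` of `g`. -/
def Ricci {n : ℕ} (g : (Fin n → ℝ) → Matrix (Fin n) (Fin n) ℝ)
    (i j : Fin n) (x : Fin n → ℝ) : ℝ :=
  (∑ ℓ, pd ℓ (fun y => Gamma g ℓ i j y) x) - (∑ ℓ, pd i (fun y => Gamma g ℓ ℓ j y) x)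
    + ∑ ℓ, ∑ s, (Gamma g ℓ ℓ s x * Gamma g s i j x - Gamma g ℓ i s x * Gamma g s ℓ j x)

/-- A function vanishes up to order `k` at `p`: it and all its partial derivatives of
order `≤ k` vanish at `p`. -/
def VanishUpTo {n : ℕ} (k : ℕ) (f : (Fin n → ℝ) → ℝ) (p : Fin n → ℝ) : Prop :=
  ∀ l : List (Fin n), l.length ≤ k → iterPD l f p = 0


/-- The plain (flat) second order operator `Â f = ∑ᵢⱼ ∂ᵢ(Aⁱʲ ∂ⱼ f)` associated to a
matrix field `A`. -/
def opPlain {n : ℕ} (A : (Fin n → ℝ) → Matrix (Fin n) (Fin n) ℝ)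
    (f : (Fin n → ℝ) → ℝ) (x : Fin n → ℝ) : ℝ :=
  ∑ i, ∑ j, pd i (fun y => A y i j * pd j f y) x

end

/-!
Write `L_{C,w} f = ∑ Cⁱʲ ∂ᵢ∂ⱼ f + ∑ wʲ ∂ⱼ f`, so that `Â = L_{A, div A}`. Expanding `L_A (L_B f)`
with the Leibniz rule `L (g h) = g L h + (L g) h + Γ(g, h)` leaves three parts: the composite in
which the coefficients of `L_B` are frozen at the point, terms of order at most two in `f`, and
the third-order term `∑ Γ_A(Bᵏˡ, ∂ₖ∂ₗ f)`. Constant-coefficient operators commute, so the frozen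
parts, which carry all fourth-order terms, cancel in the commutator. The remaining third-order
terms are `∑ Pʲᵏˡ ∂ⱼ∂ₖ∂ₗ f`, where the cubic form `P(p, p, p)` is the Poisson bracket
`{F_A, F_B}`; since it vanishes, polarization shows that `P` contracts to zero against the
symmetric tensor `∂³f`. Finally `L_{C,w} f = ∑ ∂ᵢ(Qⁱʲ ∂ⱼ f) + ∑ Vˡ ∂ₗ f` with `Q` the
symmetrization of `C` and `V = w - div Q`.
-/

open Finset

theorem sum_comm₂₁ {M α β γ : Type*} [AddCommMonoid M] [Fintype α] [Fintype β] [Fintype γ]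
    (F : α → β → γ → M) : ∑ a, ∑ b, ∑ c, F a b c = ∑ c, ∑ a, ∑ b, F a b c :=
  (Finset.sum_congr rfl fun _ _ => Finset.sum_comm).trans Finset.sum_comm

theorem sum_comm₂₂ {M α β γ δ : Type*} [AddCommMonoid M] [Fintype α] [Fintype β] [Fintype γ]
    [Fintype δ] (F : α → β → γ → δ → M) :
    ∑ a, ∑ b, ∑ c, ∑ d, F a b c d = ∑ c, ∑ d, ∑ a, ∑ b, F a b c d :=
  (sum_comm₂₁ _).trans (Finset.sum_congr rfl fun _ _ => sum_comm₂₁ _)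

section Polarization

variable {ι R : Type*} [Fintype ι] [CommRing R]

def trilinForm (T : ι → ι → ι → R) (u v w : ι → R) : R :=
  ∑ j, ∑ k, ∑ l, T j k l * u j * v k * w l

theorem trilinForm_polarization (T : ι → ι → ι → R) (u v w : ι → R) :
    trilinForm T u v w + trilinForm T u w v + trilinForm T v u w + trilinForm T v w u
        + trilinForm T w u v + trilinForm T w v u =
      trilinForm T (u + v + w) (u + v + w) (u + v + w) - trilinForm T (u + v) (u + v) (u + v)
        - trilinForm T (u + w) (u + w) (u + w) - trilinForm T (v + w) (v + w) (v + w)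
        + trilinForm T u u u + trilinForm T v v v + trilinForm T w w w := by
  simp only [trilinForm, Pi.add_apply, add_mul, mul_add, Finset.sum_add_distrib]
  ring

theorem trilinForm_single [DecidableEq ι] (T : ι → ι → ι → R) (a b c : ι) :
    trilinForm T (Pi.single a 1) (Pi.single b 1) (Pi.single c 1) = T a b c := by
  simp [trilinForm, Pi.single_apply]

theorem sum_perm_eq_zero_of_trilinForm_eq_zero {T : ι → ι → ι → R}
    (hT : ∀ p, trilinForm T p p p = 0) (a b c : ι) :
    T a b c + T a c b + T b a c + T b c a + T c a b + T c b a = 0 := by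
  classical
  simpa only [hT, trilinForm_single, sub_zero, add_zero] using
    trilinForm_polarization T (Pi.single a 1) (Pi.single b 1) (Pi.single c 1)

end Polarization

theorem sum_mul_eq_zero_of_trilinForm_eq_zero {ι 𝕜 : Type*} [Fintype ι] [Field 𝕜] [CharZero 𝕜]
    (T D : ι → ι → ι → 𝕜) (hT : ∀ p, trilinForm T p p p = 0)
    (hD₁₂ : ∀ j k l, D j k l = D k j l) (hD₂₃ : ∀ j k l, D j k l = D j l k) :
    ∑ j, ∑ k, ∑ l, T j k l * D j k l = 0 := by
  set F : (ι → ι → ι → 𝕜) → 𝕜 := fun T' => ∑ j, ∑ k, ∑ l, T' j k l * D j k l with hF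
  have hadd : ∀ T₁ T₂ : ι → ι → ι → 𝕜,
      F (fun a b c => T₁ a b c + T₂ a b c) = F T₁ + F T₂ := fun T₁ T₂ => by
    simp only [hF, add_mul, Finset.sum_add_distrib]
  have h₁₂ : ∀ T', F (fun j k l => T' k j l) = F T' := fun T' => by
    simp only [hF]
    rw [Finset.sum_comm]
    exact Finset.sum_congr rfl fun _ _ => Finset.sum_congr rfl fun _ _ =>
      Finset.sum_congr rfl fun _ _ => by rw [hD₁₂]
  have h₂₃ : ∀ T', F (fun j k l => T' j l k) = F T' := fun T' => by
    simp only [hF]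
    refine Finset.sum_congr rfl fun _ _ => ?_
    rw [Finset.sum_comm]
    exact Finset.sum_congr rfl fun _ _ => Finset.sum_congr rfl fun _ _ => by rw [hD₂₃]
  have e₁ : F (fun a b c => T a c b) = F T := h₂₃ T
  have e₂ : F (fun a b c => T b a c) = F T := h₁₂ T
  have e₃ : F (fun a b c => T b c a) = F T := (h₁₂ fun x y z => T x z y).trans e₁
  have e₄ : F (fun a b c => T c a b) = F T := (h₂₃ fun x y z => T y x z).trans e₂
  have e₅ : F (fun a b c => T c b a) = F T := (h₁₂ fun x y z => T z x y).trans e₄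
  have h6 : F (fun a b c => T a b c + T a c b + T b a c + T b c a + T c a b + T c b a) =
      6 * F T := by
    rw [hadd, hadd, hadd, hadd, hadd, e₁, e₂, e₃, e₄, e₅]; ring
  have h0 : F (fun a b c => T a b c + T a c b + T b a c + T b c a + T c a b + T c b a) = 0 := by
    simp [hF, sum_perm_eq_zero_of_trilinForm_eq_zero hT]
  simpa [h0] using h6.symm

section Calculus

variable {n : ℕ} {U : Set (Fin n → ℝ)}

section PartialDerivatives

variable {f g : (Fin n → ℝ) → ℝ} {x : Fin n → ℝ} {i j : Fin n}

theorem ContDiffOn.differentiableAt_of_isOpen {F : Type*} [NormedAddCommGroup F]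
    [NormedSpace ℝ F] {f : (Fin n → ℝ) → F} (hf : ContDiffOn ℝ (⊤ : ℕ∞) f U) (hU : IsOpen U)
    (hx : x ∈ U) : DifferentiableAt ℝ f x :=
  (hf.differentiableOn (by simp)).differentiableAt (hU.mem_nhds hx)

theorem contDiffOn_pd (hU : IsOpen U) (hf : ContDiffOn ℝ (⊤ : ℕ∞) f U) :
    ContDiffOn ℝ (⊤ : ℕ∞) (pd i f) U :=
  (hf.fderiv_of_isOpen hU le_rfl).clm_apply contDiffOn_const

theorem Set.EqOn.pd (hU : IsOpen U) (h : Set.EqOn f g U) : Set.EqOn (pd i f) (pd i g) U :=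
  fun x hx => by simp only [_root_.pd, (h.eventuallyEq_of_mem (hU.mem_nhds hx)).fderiv_eq]

theorem pd_add (hf : DifferentiableAt ℝ f x) (hg : DifferentiableAt ℝ g x) :
    pd i (fun y => f y + g y) x = pd i f x + pd i g x := by
  simp [pd, fderiv_fun_add hf hg]

theorem pd_mul (hf : DifferentiableAt ℝ f x) (hg : DifferentiableAt ℝ g x) :
    pd i (fun y => f y * g y) x = pd i f x * g x + f x * pd i g x := by
  simp [pd, fderiv_fun_mul hf hg]; ring

theorem pd_sum {ι : Type*} (s : Finset ι) {F : ι → (Fin n → ℝ) → ℝ}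
    (hF : ∀ k ∈ s, DifferentiableAt ℝ (F k) x) :
    pd i (fun y => ∑ k ∈ s, F k y) x = ∑ k ∈ s, pd i (F k) x := by
  simp [pd, fderiv_fun_sum hF]

theorem pd_const_mul (c : ℝ) (hf : DifferentiableAt ℝ f x) :
    pd i (fun y => c * f y) x = c * pd i f x := by
  simp [pd, fderiv_const_mul hf]

theorem pd_mul_const (c : ℝ) (hf : DifferentiableAt ℝ f x) :
    pd i (fun y => f y * c) x = pd i f x * c := by
  rw [pd, fderiv_mul_const hf, _root_.smul_apply, smul_eq_mul, mul_comm, pd]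

theorem pd_apply (a : Fin n) :
    pd i (fun p : Fin n → ℝ => p a) x = (Pi.single i (1 : ℝ) : Fin n → ℝ) a := by
  simp [pd, (hasFDerivAt_apply a x).fderiv]

theorem pd_comm (hU : IsOpen U) (hf : ContDiffOn ℝ (⊤ : ℕ∞) f U) (hx : x ∈ U) :
    pd i (pd j f) x = pd j (pd i f) x := by
  have hsymm : IsSymmSndFDerivAt ℝ f x :=
    ((hf x hx).contDiffAt (hU.mem_nhds hx)).isSymmSndFDerivAt
      (by simpa using WithTop.coe_le_coe.2 (le_top : (2 : ℕ∞) ≤ ⊤))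
  have hdiff : DifferentiableAt ℝ (fderiv ℝ f) x :=
    (hf.fderiv_of_isOpen hU le_rfl).differentiableAt_of_isOpen hU hx
  have key : ∀ a b : Fin n,
      pd a (pd b f) x = fderiv ℝ (fderiv ℝ f) x (Pi.single a 1) (Pi.single b 1) := fun a b => by
    change fderiv ℝ (fun y => fderiv ℝ f y (Pi.single b 1)) x _ = _
    simp [fderiv_clm_apply hdiff (differentiableAt_const _)]
  rw [key, key, hsymm]

end PartialDerivatives

section IteratedDerivatives

variable {f g : (Fin n → ℝ) → ℝ} {x : Fin n → ℝ} {i j : Fin n}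

theorem contDiffOn_iterPD (hU : IsOpen U) (hf : ContDiffOn ℝ (⊤ : ℕ∞) f U) :
    ∀ l : List (Fin n), ContDiffOn ℝ (⊤ : ℕ∞) (iterPD l f) U
  | [] => hf
  | _ :: l => contDiffOn_pd hU (contDiffOn_iterPD hU hf l)

theorem eqOn_iterPD_of_perm (hU : IsOpen U) (hf : ContDiffOn ℝ (⊤ : ℕ∞) f U)
    {l l' : List (Fin n)} (h : l.Perm l') : Set.EqOn (iterPD l f) (iterPD l' f) U := by
  induction h with
  | nil => exact Set.eqOn_refl _ _
  | cons a _ ih => exact ih.pd hU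
  | swap a b l => exact fun x hx => pd_comm hU (contDiffOn_iterPD hU hf l) hx
  | trans _ _ ih₁ ih₂ => exact ih₁.trans ih₂

theorem iterPD_append_comm (hU : IsOpen U) (hf : ContDiffOn ℝ (⊤ : ℕ∞) f U) (hx : x ∈ U)
    (l₁ l₂ : List (Fin n)) : iterPD (l₁ ++ l₂) f x = iterPD (l₂ ++ l₁) f x :=
  eqOn_iterPD_of_perm hU hf List.perm_append_comm hx

theorem pd_pd_sum (hU : IsOpen U) {ι : Type*} (s : Finset ι) {F : ι → (Fin n → ℝ) → ℝ}
    (hF : ∀ k ∈ s, ContDiffOn ℝ (⊤ : ℕ∞) (F k) U) (hx : x ∈ U) :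
    pd i (pd j (fun y => ∑ k ∈ s, F k y)) x = ∑ k ∈ s, pd i (pd j (F k)) x := by
  have h : Set.EqOn (pd j (fun y => ∑ k ∈ s, F k y)) (fun y => ∑ k ∈ s, pd j (F k) y) U :=
    fun y hy => pd_sum s fun k hk => (hF k hk).differentiableAt_of_isOpen hU hy
  rw [h.pd hU hx,
    pd_sum s fun k hk => (contDiffOn_pd hU (hF k hk)).differentiableAt_of_isOpen hU hx]

theorem pd_pd_mul (hU : IsOpen U) (hf : ContDiffOn ℝ (⊤ : ℕ∞) f U)
    (hg : ContDiffOn ℝ (⊤ : ℕ∞) g U) (hx : x ∈ U) :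
    pd i (pd j (fun y => f y * g y)) x =
      pd i (pd j f) x * g x + pd j f x * pd i g x
        + (pd i f x * pd j g x + f x * pd i (pd j g) x) := by
  have hd : ∀ {h : (Fin n → ℝ) → ℝ}, ContDiffOn ℝ (⊤ : ℕ∞) h U → DifferentiableAt ℝ h x :=
    fun h => h.differentiableAt_of_isOpen hU hx
  have h : Set.EqOn (pd j (fun y => f y * g y)) (fun y => pd j f y * g y + f y * pd j g y) U :=
    fun y hy => pd_mul (hf.differentiableAt_of_isOpen hU hy) (hg.differentiableAt_of_isOpen hU hy)
  rw [h.pd hU hx, pd_add ((hd (contDiffOn_pd hU hf)).fun_mul (hd hg))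
    ((hd hf).fun_mul (hd (contDiffOn_pd hU hg))),
    pd_mul (hd (contDiffOn_pd hU hf)) (hd hg), pd_mul (hd hf) (hd (contDiffOn_pd hU hg))]

end IteratedDerivatives

theorem pd_quadForm (M : Matrix (Fin n) (Fin n) ℝ) (i : Fin n) (p : Fin n → ℝ) :
    pd i (fun p' => ∑ a, ∑ b, p' a * M a b * p' b) p = ∑ a, (M i a + M a i) * p a := by
  have hd : ∀ a b, DifferentiableAt ℝ (fun p' : Fin n → ℝ => p' a * M a b * p' b) p :=
    fun a b => by fun_prop
  have hterm : ∀ a b, pd i (fun p' : Fin n → ℝ => p' a * M a b * p' b) p =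
      (Pi.single i (1 : ℝ) : Fin n → ℝ) a * M a b * p b +
        p a * M a b * (Pi.single i (1 : ℝ) : Fin n → ℝ) b := fun a b => by
    rw [pd_mul (by fun_prop) (by fun_prop), pd_mul_const _ (by fun_prop), pd_apply, pd_apply]
  rw [pd_sum _ fun a _ => DifferentiableAt.fun_sum fun b _ => hd a b,
    Finset.sum_congr rfl fun a _ => pd_sum _ fun b _ => hd a b]
  simp only [hterm]
  simp [Finset.sum_add_distrib, Pi.single_apply, add_mul, mul_comm (p _)]

theorem pd_quadForm_coeff {B : (Fin n → ℝ) → Matrix (Fin n) (Fin n) ℝ} {x : Fin n → ℝ}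
    (hB : ∀ a b, DifferentiableAt ℝ (fun y => B y a b) x) (i : Fin n) (p : Fin n → ℝ) :
    pd i (fun x' => ∑ a, ∑ b, p a * B x' a b * p b) x =
      ∑ a, ∑ b, p a * pd i (fun y => B y a b) x * p b := by
  have hd : ∀ a b, DifferentiableAt ℝ (fun y => p a * B y a b * p b) x :=
    fun a b => ((hB a b).const_mul _).mul_const _
  rw [pd_sum _ fun a _ => DifferentiableAt.fun_sum fun b _ => hd a b]
  refine Finset.sum_congr rfl fun a _ => ?_
  rw [pd_sum _ fun b _ => hd a b]
  exact Finset.sum_congr rfl fun b _ => by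
    rw [pd_mul_const _ ((hB a b).const_mul _), pd_const_mul _ (hB a b)]

noncomputable def secondOrderOp (C : (Fin n → ℝ) → Matrix (Fin n) (Fin n) ℝ)
    (w : (Fin n → ℝ) → Fin n → ℝ) (f : (Fin n → ℝ) → ℝ) (x : Fin n → ℝ) : ℝ :=
  ∑ i, ∑ j, C x i j * pd i (pd j f) x + ∑ j, w x j * pd j f x

/-- Twice the carré du champ of `secondOrderOp C w`, whatever `w`. -/
noncomputable def carreDuChamp (C : (Fin n → ℝ) → Matrix (Fin n) (Fin n) ℝ)
    (g h : (Fin n → ℝ) → ℝ) (x : Fin n → ℝ) : ℝ :=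
  ∑ i, ∑ j, (C x i j + C x j i) * pd i g x * pd j h x

noncomputable def matrixDiv (A : (Fin n → ℝ) → Matrix (Fin n) (Fin n) ℝ) (x : Fin n → ℝ)
    (j : Fin n) : ℝ :=
  ∑ i, pd i (fun y => A y i j) x

section SecondOrderOperators

variable {A B C : (Fin n → ℝ) → Matrix (Fin n) (Fin n) ℝ} {a b w : (Fin n → ℝ) → Fin n → ℝ}
  {f g h : (Fin n → ℝ) → ℝ} {x : Fin n → ℝ}

theorem contDiffOn_secondOrderOp (hU : IsOpen U)
    (hC : ∀ i j, ContDiffOn ℝ (⊤ : ℕ∞) (fun x => C x i j) U)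
    (hw : ∀ j, ContDiffOn ℝ (⊤ : ℕ∞) (fun x => w x j) U) (hf : ContDiffOn ℝ (⊤ : ℕ∞) f U) :
    ContDiffOn ℝ (⊤ : ℕ∞) (secondOrderOp C w f) U :=
  (ContDiffOn.sum fun i _ => ContDiffOn.sum fun j _ =>
      (hC i j).mul (contDiffOn_pd hU (contDiffOn_pd hU hf))).add
    (ContDiffOn.sum fun j _ => (hw j).mul (contDiffOn_pd hU hf))

theorem secondOrderOp_congr (hU : IsOpen U) (hfg : Set.EqOn f g U) (hx : x ∈ U) :
    secondOrderOp C w f x = secondOrderOp C w g x := by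
  simp only [secondOrderOp, (hfg.pd hU).pd hU hx, hfg.pd hU hx]

theorem secondOrderOp_sum (hU : IsOpen U) {ι : Type*} (s : Finset ι) {F : ι → (Fin n → ℝ) → ℝ}
    (hF : ∀ k ∈ s, ContDiffOn ℝ (⊤ : ℕ∞) (F k) U) (hx : x ∈ U) :
    secondOrderOp C w (fun y => ∑ k ∈ s, F k y) x = ∑ k ∈ s, secondOrderOp C w (F k) x := by
  simp only [secondOrderOp, pd_pd_sum hU s hF hx,
    pd_sum s fun k hk => (hF k hk).differentiableAt_of_isOpen hU hx, Finset.mul_sum,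
    Finset.sum_add_distrib]
  exact congrArg₂ (· + ·)
    ((Finset.sum_congr rfl fun _ _ => Finset.sum_comm).trans Finset.sum_comm) Finset.sum_comm

theorem secondOrderOp_add (hU : IsOpen U) (hf : ContDiffOn ℝ (⊤ : ℕ∞) f U)
    (hg : ContDiffOn ℝ (⊤ : ℕ∞) g U) (hx : x ∈ U) :
    secondOrderOp C w (fun y => f y + g y) x = secondOrderOp C w f x + secondOrderOp C w g x := by
  simpa using secondOrderOp_sum (C := C) (w := w) hU Finset.univ (F := ![f, g])
    (by simp [Fin.forall_fin_two, hf, hg]) hx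

theorem secondOrderOp_mul (hU : IsOpen U) (hg : ContDiffOn ℝ (⊤ : ℕ∞) g U)
    (hh : ContDiffOn ℝ (⊤ : ℕ∞) h U) (hx : x ∈ U) :
    secondOrderOp C w (fun y => g y * h y) x =
      g x * secondOrderOp C w h x + secondOrderOp C w g x * h x + carreDuChamp C g h x := by
  have hswap : ∑ i, ∑ j, C x i j * (pd j g x * pd i h x) =
      ∑ i, ∑ j, C x j i * pd i g x * pd j h x :=
    Finset.sum_comm.trans (Finset.sum_congr rfl fun _ _ => Finset.sum_congr rfl fun _ _ => by ring)
  have hexpand₂ : ∀ i j, C x i j * (pd i (pd j g) x * h x + pd j g x * pd i h x +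
      (pd i g x * pd j h x + g x * pd i (pd j h) x)) =
      g x * (C x i j * pd i (pd j h) x) + C x i j * pd i (pd j g) x * h x +
        C x i j * pd i g x * pd j h x + C x i j * (pd j g x * pd i h x) := fun i j => by ring
  have hexpand₁ : ∀ j, w x j * (pd j g x * h x + g x * pd j h x) =
      g x * (w x j * pd j h x) + w x j * pd j g x * h x := fun j => by ring
  simp only [secondOrderOp, carreDuChamp, pd_pd_mul hU hg hh hx,
    pd_mul (hg.differentiableAt_of_isOpen hU hx) (hh.differentiableAt_of_isOpen hU hx),
    hexpand₂, hexpand₁, Finset.sum_add_distrib, hswap]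
  simp only [mul_add, add_mul, Finset.mul_sum, Finset.sum_mul, Finset.sum_add_distrib]
  ring

theorem opPlain_eq_secondOrderOp (hU : IsOpen U)
    (hA : ∀ i j, ContDiffOn ℝ (⊤ : ℕ∞) (fun x => A x i j) U) (hf : ContDiffOn ℝ (⊤ : ℕ∞) f U)
    (hx : x ∈ U) : opPlain A f x = secondOrderOp A (matrixDiv A) f x := by
  have hpf : ∀ j, DifferentiableAt ℝ (pd j f) x :=
    fun j => (contDiffOn_pd hU hf).differentiableAt_of_isOpen hU hx
  simp only [opPlain, secondOrderOp, matrixDiv,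
    pd_mul ((hA _ _).differentiableAt_of_isOpen hU hx) (hpf _), Finset.sum_add_distrib,
    Finset.sum_mul]
  rw [add_comm, Finset.sum_comm (s := Finset.univ) (t := Finset.univ)
    (f := fun i j => pd i (fun y => A y i j) x * pd j f x)]

theorem contDiffOn_matrixDiv (hU : IsOpen U)
    (hA : ∀ i j, ContDiffOn ℝ (⊤ : ℕ∞) (fun x => A x i j) U) (j : Fin n) :
    ContDiffOn ℝ (⊤ : ℕ∞) (fun x => matrixDiv A x j) U :=
  ContDiffOn.sum fun i _ => contDiffOn_pd hU (hA i j)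

theorem opPlain_opPlain_eq (hU : IsOpen U)
    (hA : ∀ i j, ContDiffOn ℝ (⊤ : ℕ∞) (fun x => A x i j) U)
    (hB : ∀ i j, ContDiffOn ℝ (⊤ : ℕ∞) (fun x => B x i j) U)
    (hf : ContDiffOn ℝ (⊤ : ℕ∞) f U) (hx : x ∈ U) :
    opPlain A (opPlain B f) x =
      secondOrderOp A (matrixDiv A) (secondOrderOp B (matrixDiv B) f) x := by
  have hBf : Set.EqOn (opPlain B f) (secondOrderOp B (matrixDiv B) f) U :=
    fun y hy => opPlain_eq_secondOrderOp hU hB hf hy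
  rw [opPlain_eq_secondOrderOp hU hA
      ((contDiffOn_secondOrderOp hU hB (contDiffOn_matrixDiv hU hB) hf).congr hBf) hx,
    secondOrderOp_congr hU hBf hx]

theorem secondOrderOp_symmetrize (hU : IsOpen U) (hf : ContDiffOn ℝ (⊤ : ℕ∞) f U) (hx : x ∈ U) :
    secondOrderOp C w f x =
      secondOrderOp (fun y => Matrix.of fun i j => (C y i j + C y j i) / 2) w f x := by
  have hswap : ∑ i, ∑ j, C x j i * pd i (pd j f) x = ∑ i, ∑ j, C x i j * pd i (pd j f) x :=
    Finset.sum_comm.trans (Finset.sum_congr rfl fun i _ => Finset.sum_congr rfl fun j _ => by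
      rw [pd_comm hU hf hx])
  simp only [secondOrderOp, Matrix.of_apply, add_div, add_mul, Finset.sum_add_distrib,
    div_mul_eq_mul_div, ← Finset.sum_div, hswap]
  ring

theorem secondOrderOp_secondOrderOp (hU : IsOpen U)
    (hB : ∀ i j, ContDiffOn ℝ (⊤ : ℕ∞) (fun x => B x i j) U)
    (hb : ∀ j, ContDiffOn ℝ (⊤ : ℕ∞) (fun x => b x j) U) (hf : ContDiffOn ℝ (⊤ : ℕ∞) f U)
    (hx : x ∈ U) :
    secondOrderOp A a (secondOrderOp B b f) x =
      (∑ k, ∑ l, B x k l * secondOrderOp A a (pd k (pd l f)) x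
          + ∑ l, b x l * secondOrderOp A a (pd l f) x)
        + (∑ k, ∑ l, secondOrderOp A a (fun y => B y k l) x * pd k (pd l f) x
          + ∑ l, secondOrderOp A a (fun y => b y l) x * pd l f x
          + ∑ l, carreDuChamp A (fun y => b y l) (pd l f) x)
        + ∑ k, ∑ l, carreDuChamp A (fun y => B y k l) (pd k (pd l f)) x := by
  have h₂ : ∀ k l, ContDiffOn ℝ (⊤ : ℕ∞) (pd k (pd l f)) U :=
    fun k l => contDiffOn_pd hU (contDiffOn_pd hU hf)
  have h₁ : ∀ l, ContDiffOn ℝ (⊤ : ℕ∞) (pd l f) U := fun l => contDiffOn_pd hU hf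
  have hBf : ∀ k l, ContDiffOn ℝ (⊤ : ℕ∞) (fun y => B y k l * pd k (pd l f) y) U :=
    fun k l => (hB k l).mul (h₂ k l)
  have hbf : ∀ l, ContDiffOn ℝ (⊤ : ℕ∞) (fun y => b y l * pd l f y) U :=
    fun l => (hb l).mul (h₁ l)
  change secondOrderOp A a (fun y => ∑ k, ∑ l, B y k l * pd k (pd l f) y
    + ∑ l, b y l * pd l f y) x = _
  rw [secondOrderOp_add hU (ContDiffOn.sum fun k _ => ContDiffOn.sum fun l _ => hBf k l)
      (ContDiffOn.sum fun l _ => hbf l) hx,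
    secondOrderOp_sum hU _ (fun k _ => ContDiffOn.sum fun l _ => hBf k l) hx,
    secondOrderOp_sum hU _ (fun l _ => hbf l) hx,
    Finset.sum_congr rfl fun k _ => secondOrderOp_sum hU _ (fun l _ => hBf k l) hx]
  simp only [secondOrderOp_mul hU (hB _ _) (h₂ _ _) hx, secondOrderOp_mul hU (hb _) (h₁ _) hx,
    Finset.sum_add_distrib]
  ring

/-- Both sides are the value at `x` of the composite of the two constant-coefficient operators
obtained by freezing the coefficients at `x`, and such operators commute. -/
theorem sum_mul_secondOrderOp_comm (hU : IsOpen U) (hf : ContDiffOn ℝ (⊤ : ℕ∞) f U)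
    (hx : x ∈ U) :
    ∑ k, ∑ l, B x k l * secondOrderOp A a (pd k (pd l f)) x
        + ∑ l, b x l * secondOrderOp A a (pd l f) x =
      ∑ k, ∑ l, A x k l * secondOrderOp B b (pd k (pd l f)) x
        + ∑ l, a x l * secondOrderOp B b (pd l f) x := by
  have hD := iterPD_append_comm hU hf hx
  have h₄ : ∀ M N : Matrix (Fin n) (Fin n) ℝ,
      ∑ k, ∑ l, M k l * ∑ i, ∑ j, N i j * pd i (pd j (pd k (pd l f))) x =
        ∑ k, ∑ l, N k l * ∑ i, ∑ j, M i j * pd i (pd j (pd k (pd l f))) x := fun M N => by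
    simp only [Finset.mul_sum]
    rw [sum_comm₂₂]
    refine Finset.sum_congr rfl fun i _ => Finset.sum_congr rfl fun j _ =>
      Finset.sum_congr rfl fun k _ => Finset.sum_congr rfl fun l _ => ?_
    rw [show pd i (pd j (pd k (pd l f))) x = pd k (pd l (pd i (pd j f))) x from hD [i, j] [k, l]]
    ring
  have h₃ : ∀ (M : Matrix (Fin n) (Fin n) ℝ) (v : Fin n → ℝ),
      ∑ k, ∑ l, M k l * ∑ j, v j * pd j (pd k (pd l f)) x =
        ∑ l, v l * ∑ i, ∑ j, M i j * pd i (pd j (pd l f)) x := fun M v => by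
    simp only [Finset.mul_sum]
    rw [sum_comm₂₁]
    refine Finset.sum_congr rfl fun j _ => Finset.sum_congr rfl fun k _ =>
      Finset.sum_congr rfl fun l _ => ?_
    rw [show pd j (pd k (pd l f)) x = pd k (pd l (pd j f)) x from hD [j] [k, l]]
    ring
  have h₂ : ∀ u v : Fin n → ℝ, ∑ l, v l * ∑ j, u j * pd j (pd l f) x =
      ∑ l, u l * ∑ j, v j * pd j (pd l f) x := fun u v => by
    simp only [Finset.mul_sum]
    rw [Finset.sum_comm]
    refine Finset.sum_congr rfl fun j _ => Finset.sum_congr rfl fun l _ => ?_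
    rw [show pd j (pd l f) x = pd l (pd j f) x from hD [j] [l]]
    ring
  simp only [secondOrderOp, mul_add, Finset.sum_add_distrib]
  linarith [h₄ (B x) (A x), h₃ (B x) (a x), h₃ (A x) (b x), h₂ (a x) (b x)]

end SecondOrderOperators

def IsSecondOrderOn (U : Set (Fin n → ℝ)) (P : ((Fin n → ℝ) → ℝ) → (Fin n → ℝ) → ℝ) : Prop :=
  ∃ (C : (Fin n → ℝ) → Matrix (Fin n) (Fin n) ℝ) (w : (Fin n → ℝ) → Fin n → ℝ),
    (∀ i j, ContDiffOn ℝ (⊤ : ℕ∞) (fun x => C x i j) U) ∧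
    (∀ j, ContDiffOn ℝ (⊤ : ℕ∞) (fun x => w x j) U) ∧
    ∀ f, ContDiffOn ℝ (⊤ : ℕ∞) f U → ∀ x ∈ U, P f x = secondOrderOp C w f x

namespace IsSecondOrderOn

variable {P Q : ((Fin n → ℝ) → ℝ) → (Fin n → ℝ) → ℝ}

theorem congr (hP : IsSecondOrderOn U P)
    (h : ∀ f, ContDiffOn ℝ (⊤ : ℕ∞) f U → ∀ x ∈ U, Q f x = P f x) : IsSecondOrderOn U Q := by
  obtain ⟨C, w, hC, hw, hPCw⟩ := hP
  exact ⟨C, w, hC, hw, fun f hf x hx => (h f hf x hx).trans (hPCw f hf x hx)⟩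

theorem zero : IsSecondOrderOn U (fun _ _ => 0) :=
  ⟨0, 0, fun _ _ => contDiffOn_const, fun _ => contDiffOn_const, fun _ _ _ _ => by
    simp [secondOrderOp]⟩

theorem add (hP : IsSecondOrderOn U P) (hQ : IsSecondOrderOn U Q) :
    IsSecondOrderOn U (fun f x => P f x + Q f x) := by
  obtain ⟨C, w, hC, hw, hPCw⟩ := hP
  obtain ⟨C', w', hC', hw', hQCw⟩ := hQ
  refine ⟨C + C', w + w', fun i j => (hC i j).add (hC' i j), fun j => (hw j).add (hw' j),
    fun f hf x hx => ?_⟩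
  simp only [hPCw f hf x hx, hQCw f hf x hx, secondOrderOp, Pi.add_apply, Matrix.add_apply,
    add_mul, Finset.sum_add_distrib]
  ring

theorem sub (hP : IsSecondOrderOn U P) (hQ : IsSecondOrderOn U Q) :
    IsSecondOrderOn U (fun f x => P f x - Q f x) := by
  obtain ⟨C, w, hC, hw, hPCw⟩ := hP
  obtain ⟨C', w', hC', hw', hQCw⟩ := hQ
  refine ⟨C - C', w - w', fun i j => (hC i j).sub (hC' i j), fun j => (hw j).sub (hw' j),
    fun f hf x hx => ?_⟩
  simp only [hPCw f hf x hx, hQCw f hf x hx, secondOrderOp, Pi.sub_apply, Matrix.sub_apply,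
    sub_mul, Finset.sum_sub_distrib]
  ring

theorem sum {ι : Type*} (s : Finset ι) {P : ι → ((Fin n → ℝ) → ℝ) → (Fin n → ℝ) → ℝ}
    (hP : ∀ k ∈ s, IsSecondOrderOn U (P k)) :
    IsSecondOrderOn U (fun f x => ∑ k ∈ s, P k f x) := by
  classical
  induction s using Finset.induction_on with
  | empty => simpa using zero
  | insert k s hk ih =>
    simp only [Finset.sum_insert hk]
    exact (hP k (s.mem_insert_self k)).add
      (ih fun k' hk' => hP k' (Finset.mem_insert_of_mem hk'))

theorem mul_left {g : (Fin n → ℝ) → ℝ} (hg : ContDiffOn ℝ (⊤ : ℕ∞) g U)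
    (hP : IsSecondOrderOn U P) : IsSecondOrderOn U (fun f x => g x * P f x) := by
  obtain ⟨C, w, hC, hw, hPCw⟩ := hP
  refine ⟨fun x => g x • C x, fun x => g x • w x, fun i j => hg.mul (hC i j),
    fun j => hg.mul (hw j), fun f hf x hx => ?_⟩
  simp only [hPCw f hf x hx, secondOrderOp, Matrix.smul_apply, Pi.smul_apply, smul_eq_mul,
    mul_add, Finset.mul_sum, mul_assoc]

end IsSecondOrderOn

theorem isSecondOrderOn_pd_pd (k l : Fin n) : IsSecondOrderOn U (fun f => pd k (pd l f)) :=
  ⟨fun _ => Matrix.single k l 1, 0, fun _ _ => contDiffOn_const, fun _ => contDiffOn_const,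
    fun _ _ _ _ => by simp [secondOrderOp, Matrix.single_apply, ite_and]⟩

theorem isSecondOrderOn_pd (l : Fin n) : IsSecondOrderOn U (fun f => pd l f) :=
  ⟨0, fun _ => Pi.single l 1, fun _ _ => contDiffOn_const, fun _ => contDiffOn_const,
    fun _ _ _ _ => by simp [secondOrderOp, Pi.single_apply]⟩

theorem IsSecondOrderOn.exists_opPlain {P : ((Fin n → ℝ) → ℝ) → (Fin n → ℝ) → ℝ}
    (hU : IsOpen U) (hP : IsSecondOrderOn U P) :
    ∃ (Q : (Fin n → ℝ) → Matrix (Fin n) (Fin n) ℝ) (V : (Fin n → ℝ) → Fin n → ℝ),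
      (∀ i j : Fin n, ContDiffOn ℝ (⊤ : ℕ∞) (fun x => Q x i j) U) ∧
      (∀ x ∈ U, (Q x).IsSymm) ∧
      (∀ ℓ : Fin n, ContDiffOn ℝ (⊤ : ℕ∞) (fun x => V x ℓ) U) ∧
      ∀ f : (Fin n → ℝ) → ℝ, ContDiffOn ℝ (⊤ : ℕ∞) f U → ∀ x ∈ U,
        P f x = opPlain Q f x + ∑ ℓ, V x ℓ * pd ℓ f x := by
  obtain ⟨C, w, hC, hw, hPCw⟩ := hP
  set Q : (Fin n → ℝ) → Matrix (Fin n) (Fin n) ℝ :=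
    fun y => Matrix.of fun i j => (C y i j + C y j i) / 2 with hQ_def
  have hQ : ∀ i j, ContDiffOn ℝ (⊤ : ℕ∞) (fun x => Q x i j) U :=
    fun i j => ((hC i j).add (hC j i)).div_const 2
  refine ⟨Q, fun x l => w x l - matrixDiv Q x l, hQ, fun x _ => ?_,
    fun l => (hw l).sub (contDiffOn_matrixDiv hU hQ l), fun f hf x hx => ?_⟩
  · ext i j
    simp [hQ_def, add_comm]
  · rw [hPCw f hf x hx, secondOrderOp_symmetrize hU hf hx, opPlain_eq_secondOrderOp hU hQ hf hx]
    simp only [secondOrderOp, sub_mul, Finset.sum_sub_distrib]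
    ring

noncomputable def poissonTensor (A B : (Fin n → ℝ) → Matrix (Fin n) (Fin n) ℝ) (x : Fin n → ℝ)
    (j k l : Fin n) : ℝ :=
  ∑ i, ((A x i j + A x j i) * pd i (fun y => B y k l) x
    - (B x i j + B x j i) * pd i (fun y => A y k l) x)

section Commutator

variable {A B : (Fin n → ℝ) → Matrix (Fin n) (Fin n) ℝ} {a b : (Fin n → ℝ) → Fin n → ℝ}
  {x : Fin n → ℝ}

theorem isSecondOrderOn_carreDuChamp (hU : IsOpen U)
    (hA : ∀ i j, ContDiffOn ℝ (⊤ : ℕ∞) (fun x => A x i j) U) {g : (Fin n → ℝ) → ℝ}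
    (hg : ContDiffOn ℝ (⊤ : ℕ∞) g U) (l : Fin n) :
    IsSecondOrderOn U (fun f => carreDuChamp A g (pd l f)) :=
  IsSecondOrderOn.sum univ fun i _ => IsSecondOrderOn.sum univ fun j _ =>
    IsSecondOrderOn.mul_left (((hA i j).add (hA j i)).mul (contDiffOn_pd hU hg))
      (isSecondOrderOn_pd_pd j l)

theorem isSecondOrderOn_secondOrderOp_comp_sub (hU : IsOpen U)
    (hA : ∀ i j, ContDiffOn ℝ (⊤ : ℕ∞) (fun x => A x i j) U)
    (ha : ∀ j, ContDiffOn ℝ (⊤ : ℕ∞) (fun x => a x j) U)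
    (hB : ∀ i j, ContDiffOn ℝ (⊤ : ℕ∞) (fun x => B x i j) U)
    (hb : ∀ j, ContDiffOn ℝ (⊤ : ℕ∞) (fun x => b x j) U) :
    IsSecondOrderOn U (fun f x => secondOrderOp A a (secondOrderOp B b f) x
      - ∑ k, ∑ l, B x k l * secondOrderOp A a (pd k (pd l f)) x
      - ∑ l, b x l * secondOrderOp A a (pd l f) x
      - ∑ k, ∑ l, carreDuChamp A (fun y => B y k l) (pd k (pd l f)) x) := by
  refine (((IsSecondOrderOn.sum univ fun k _ => IsSecondOrderOn.sum univ fun l _ =>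
      (isSecondOrderOn_pd_pd k l).mul_left (contDiffOn_secondOrderOp hU hA ha (hB k l))).add
    (IsSecondOrderOn.sum univ fun l _ =>
      (isSecondOrderOn_pd l).mul_left (contDiffOn_secondOrderOp hU hA ha (hb l)))).add
    (IsSecondOrderOn.sum univ fun l _ => isSecondOrderOn_carreDuChamp hU hA (hb l) l)).congr
    fun f hf x hx => ?_
  rw [secondOrderOp_secondOrderOp hU hB hb hf hx]
  simp only [mul_comm (secondOrderOp A a _ x)]
  ring

theorem poissonBracket_eq_trilinForm (hA : ∀ a b, DifferentiableAt ℝ (fun y => A y a b) x)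
    (hB : ∀ a b, DifferentiableAt ℝ (fun y => B y a b) x) (p : Fin n → ℝ) :
    ∑ i, (pd i (fun p' => ∑ a, ∑ b, p' a * A x a b * p' b) p *
            pd i (fun x' => ∑ a, ∑ b, p a * B x' a b * p b) x -
          pd i (fun x' => ∑ a, ∑ b, p a * A x' a b * p b) x *
            pd i (fun p' => ∑ a, ∑ b, p' a * B x a b * p' b) p) =
      trilinForm (poissonTensor A B x) p p p := by
  simp only [pd_quadForm, pd_quadForm_coeff hA, pd_quadForm_coeff hB,
    mul_comm (∑ a, ∑ b, p a * pd _ (fun y => A y a b) x * p b), Finset.sum_mul, Finset.mul_sum,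
    ← Finset.sum_sub_distrib, trilinForm, poissonTensor]
  refine (Finset.sum_congr rfl fun i _ => sum_comm₂₁ _).trans ?_
  rw [Finset.sum_comm]
  refine Finset.sum_congr rfl fun j _ => ?_
  rw [← sum_comm₂₁]
  exact Finset.sum_congr rfl fun k _ => Finset.sum_congr rfl fun l _ =>
    Finset.sum_congr rfl fun i _ => by ring

theorem sum_carreDuChamp_sub_eq_sum_poissonTensor (f : (Fin n → ℝ) → ℝ) :
    ∑ k, ∑ l, (carreDuChamp A (fun y => B y k l) (pd k (pd l f)) x
        - carreDuChamp B (fun y => A y k l) (pd k (pd l f)) x) =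
      ∑ j, ∑ k, ∑ l, poissonTensor A B x j k l * pd j (pd k (pd l f)) x := by
  simp only [carreDuChamp, poissonTensor, ← Finset.sum_sub_distrib, Finset.sum_mul]
  refine (Finset.sum_congr rfl fun k _ => Finset.sum_congr rfl fun l _ =>
    Finset.sum_comm).trans ((sum_comm₂₁ _).trans ?_)
  exact Finset.sum_congr rfl fun j _ => Finset.sum_congr rfl fun k _ =>
    Finset.sum_congr rfl fun l _ => Finset.sum_congr rfl fun i _ => by ring

theorem isSecondOrderOn_commutator_sub_poissonTensor (hU : IsOpen U)
    (hA : ∀ i j, ContDiffOn ℝ (⊤ : ℕ∞) (fun x => A x i j) U)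
    (ha : ∀ j, ContDiffOn ℝ (⊤ : ℕ∞) (fun x => a x j) U)
    (hB : ∀ i j, ContDiffOn ℝ (⊤ : ℕ∞) (fun x => B x i j) U)
    (hb : ∀ j, ContDiffOn ℝ (⊤ : ℕ∞) (fun x => b x j) U) :
    IsSecondOrderOn U (fun f x =>
      secondOrderOp A a (secondOrderOp B b f) x - secondOrderOp B b (secondOrderOp A a f) x
        - ∑ j, ∑ k, ∑ l, poissonTensor A B x j k l * pd j (pd k (pd l f)) x) := by
  refine ((isSecondOrderOn_secondOrderOp_comp_sub hU hA ha hB hb).sub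
    (isSecondOrderOn_secondOrderOp_comp_sub hU hB hb hA ha)).congr fun f hf x hx => ?_
  rw [← sum_carreDuChamp_sub_eq_sum_poissonTensor]
  simp only [Finset.sum_sub_distrib]
  linarith [sum_mul_secondOrderOp_comm (A := A) (a := a) (B := B) (b := b) hU hf hx]

theorem sum_poissonTensor_mul_eq_zero (hU : IsOpen U) {f : (Fin n → ℝ) → ℝ}
    (hf : ContDiffOn ℝ (⊤ : ℕ∞) f U) (hx : x ∈ U)
    (hP : ∀ p, trilinForm (poissonTensor A B x) p p p = 0) :
    ∑ j, ∑ k, ∑ l, poissonTensor A B x j k l * pd j (pd k (pd l f)) x = 0 :=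
  sum_mul_eq_zero_of_trilinForm_eq_zero _ (fun j k l => pd j (pd k (pd l f)) x) hP
    (fun j k l => eqOn_iterPD_of_perm hU hf (List.Perm.swap k j [l]) hx)
    (fun j k l => eqOn_iterPD_of_perm hU hf ((List.Perm.swap l k []).cons j) hx)

end Commutator

end Calculus

theorem commutator_is_second_order_general {n : ℕ} (U : Set (Fin n → ℝ)) (hUo : IsOpen U)
    (A B : (Fin n → ℝ) → Matrix (Fin n) (Fin n) ℝ)
    (hAs : ∀ i j : Fin n, ContDiffOn ℝ (⊤ : ℕ∞) (fun x => A x i j) U)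
    (hBs : ∀ i j : Fin n, ContDiffOn ℝ (⊤ : ℕ∞) (fun x => B x i j) U)
    (hPoisson : ∀ x ∈ U, ∀ p : Fin n → ℝ,
      ∑ i, (pd i (fun p' => ∑ a, ∑ b, p' a * A x a b * p' b) p *
              pd i (fun x' => ∑ a, ∑ b, p a * B x' a b * p b) x -
            pd i (fun x' => ∑ a, ∑ b, p a * A x' a b * p b) x *
              pd i (fun p' => ∑ a, ∑ b, p' a * B x a b * p' b) p) = 0) :
    ∃ (Q : (Fin n → ℝ) → Matrix (Fin n) (Fin n) ℝ) (V : (Fin n → ℝ) → Fin n → ℝ),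
      (∀ i j : Fin n, ContDiffOn ℝ (⊤ : ℕ∞) (fun x => Q x i j) U) ∧
      (∀ x ∈ U, (Q x).IsSymm) ∧
      (∀ ℓ : Fin n, ContDiffOn ℝ (⊤ : ℕ∞) (fun x => V x ℓ) U) ∧
      ∀ f : (Fin n → ℝ) → ℝ, ContDiffOn ℝ (⊤ : ℕ∞) f U → ∀ x ∈ U,
        opPlain A (opPlain B f) x - opPlain B (opPlain A f) x =
          opPlain Q f x + ∑ ℓ, V x ℓ * pd ℓ f x := by
  refine IsSecondOrderOn.exists_opPlain hUo <|
    (isSecondOrderOn_commutator_sub_poissonTensor hUo hAs (contDiffOn_matrixDiv hUo hAs) hBs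
      (contDiffOn_matrixDiv hUo hBs)).congr fun f hf x hx => ?_
  have hcubic : ∀ p, trilinForm (poissonTensor A B x) p p p = 0 := fun p => by
    rw [← poissonBracket_eq_trilinForm (fun a b => (hAs a b).differentiableAt_of_isOpen hUo hx)
      (fun a b => (hBs a b).differentiableAt_of_isOpen hUo hx)]
    exact hPoisson x hx p
  rw [sum_poissonTensor_mul_eq_zero hUo hf hx hcubic, opPlain_opPlain_eq hUo hAs hBs hf hx,
    opPlain_opPlain_eq hUo hBs hAs hf hx, sub_zero]

theorem commutator_is_second_order {n : ℕ} (U : Set (Fin n → ℝ)) (hUo : IsOpen U)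
    (A B : (Fin n → ℝ) → Matrix (Fin n) (Fin n) ℝ)
    (hAs : ∀ i j : Fin n, ContDiffOn ℝ (⊤ : ℕ∞) (fun x => A x i j) U)
    (hBs : ∀ i j : Fin n, ContDiffOn ℝ (⊤ : ℕ∞) (fun x => B x i j) U)
    (hAsym : ∀ x ∈ U, (A x).IsSymm) (hBsym : ∀ x ∈ U, (B x).IsSymm)
    (hPoisson : ∀ x ∈ U, ∀ p : Fin n → ℝ,
      ∑ i, (pd i (fun p' => ∑ a, ∑ b, p' a * A x a b * p' b) p *
              pd i (fun x' => ∑ a, ∑ b, p a * B x' a b * p b) x -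
            pd i (fun x' => ∑ a, ∑ b, p a * A x' a b * p b) x *
              pd i (fun p' => ∑ a, ∑ b, p' a * B x a b * p' b) p) = 0) :
    ∃ (Q : (Fin n → ℝ) → Matrix (Fin n) (Fin n) ℝ) (V : (Fin n → ℝ) → Fin n → ℝ),
      (∀ i j : Fin n, ContDiffOn ℝ (⊤ : ℕ∞) (fun x => Q x i j) U) ∧
      (∀ x ∈ U, (Q x).IsSymm) ∧
      (∀ ℓ : Fin n, ContDiffOn ℝ (⊤ : ℕ∞) (fun x => V x ℓ) U) ∧
      ∀ f : (Fin n → ℝ) → ℝ, ContDiffOn ℝ (⊤ : ℕ∞) f U → ∀ x ∈ U,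
        opPlain A (opPlain B f) x - opPlain B (opPlain A f) x =
          opPlain Q f x + ∑ ℓ, V x ℓ * pd ℓ f x :=
  commutator_is_second_order_general U hUo A B hAs hBs hPoisson
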